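/- arXiv:2004.05833 — 2 statements merged into one kernel-verified Lean document; each statement's English description precedes it below -/
import Mathlib

section
/- For every parameter κ = (κ_1,…,κ_L) with L ≥ 2, every valid log-Sobolev constant of the multislice Ω_κ is at least log(n/κ_min): if τ ∈ ℝ satisfies Ent_κ(f) ≤ τ·𝔈_κ(√f, √f) for all f : Ω_κ → [0,∞), then τ ≥ log(n/κ_min). -/
/-!
Test the inequality on the indicator `f` of `{ω : ω i₀ = ℓ}` for a color with `κ_ℓ = κ_min`.
The coordinates are exchangeable, so `E f = p := κ_ℓ / n` and `Ent f = p log (1/p)`. A transposition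
changes `f` only when it moves `i₀` to a position of the other kind, which gives
`𝔈(√f, √f) = 𝔈(f, f) = p (1 - p)`. Hence `log (1/p) ≤ τ (1 - p) ≤ τ`.
-/

open Finset

namespace Multislice

/-- The multislice `Ω_κ`: sequences of length `n` with values in `Fin L`
in which color `ℓ` appears exactly `κ ℓ` times. -/
def slice (L n : ℕ) (κ : Fin L → ℕ) : Finset (Fin n → Fin L) :=
  Finset.univ.filter fun ω => ∀ ℓ, (Finset.univ.filter fun i => ω i = ℓ).card = κ ℓ

/-- Average of `f` with respect to the uniform distribution on `Ω`. -/
noncomputable def expect {L n : ℕ} (Ω : Finset (Fin n → Fin L))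
    (f : (Fin n → Fin L) → ℝ) : ℝ :=
  (∑ ω ∈ Ω, f ω) / Ω.card

/-- Discrete gradient `(∇^{ij} f)(ω) = f(ω^{ij}) - f(ω)`. -/
noncomputable def grad {L n : ℕ} (i j : Fin n) (f : (Fin n → Fin L) → ℝ)
    (ω : Fin n → Fin L) : ℝ :=
  f (ω ∘ Equiv.swap i j) - f ω

/-- The Dirichlet form `𝔈_κ(f,g) = (1/(2n)) Σ_{i<j} E[(∇^{ij}f)(∇^{ij}g)]`. -/
noncomputable def dirichlet {L n : ℕ} (Ω : Finset (Fin n → Fin L))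
    (f g : (Fin n → Fin L) → ℝ) : ℝ :=
  (1 / (2 * (n : ℝ))) *
    ∑ p ∈ Finset.univ.filter (fun p : Fin n × Fin n => p.1 < p.2),
      expect Ω fun ω => grad p.1 p.2 f ω * grad p.1 p.2 g ω

/-- The weighted Dirichlet form `𝔈^G_κ(f,g) = (1/2) Σ_{i<j} G_{ij} E[(∇^{ij}f)(∇^{ij}g)]`. -/
noncomputable def wDirichlet {L n : ℕ} (G : Fin n → Fin n → ℝ)
    (Ω : Finset (Fin n → Fin L)) (f g : (Fin n → Fin L) → ℝ) : ℝ :=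
  (1 / 2) *
    ∑ p ∈ Finset.univ.filter (fun p : Fin n × Fin n => p.1 < p.2),
      G p.1 p.2 * expect Ω fun ω => grad p.1 p.2 f ω * grad p.1 p.2 g ω

/-- Entropy `Ent(f) = E[f log f] - E[f] log E[f]` (note `Real.log 0 = 0`). -/
noncomputable def entropy {L n : ℕ} (Ω : Finset (Fin n → Fin L))
    (f : (Fin n → Fin L) → ℝ) : ℝ :=
  expect Ω (fun ω => f ω * Real.log (f ω)) - expect Ω f * Real.log (expect Ω f)

/-- Variance `Var(f) = E[f²] - (E[f])²`. -/
noncomputable def variance {L n : ℕ} (Ω : Finset (Fin n → Fin L))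
    (f : (Fin n → Fin L) → ℝ) : ℝ :=
  expect Ω (fun ω => f ω ^ 2) - (expect Ω f) ^ 2

/-- The edge boundary `∂A` of `A ⊆ Ω`: edges (recorded as pairs with first endpoint
in `A` and second endpoint in `Ω \ A`) between `A` and its complement, where two
states are adjacent when they differ in exactly two coordinates. -/
def edgeBoundary {L n : ℕ} (Ω A : Finset (Fin n → Fin L)) :
    Finset ((Fin n → Fin L) × (Fin n → Fin L)) :=
  (A ×ˢ (Ω \ A)).filter fun p => (Finset.univ.filter fun i => p.1 i ≠ p.2 i).card = 2

/-- The `ℓ`-colored region `ξ_ℓ(ω) = {i : ω i = ℓ}`. -/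
def xi {L n : ℕ} (ℓ : Fin L) (ω : Fin n → Fin L) : Finset (Fin n) :=
  Finset.univ.filter fun i => ω i = ℓ

/-- The parameter `κ^{∖ℓ}` obtained from `κ` by removing the `ℓ`-th entry. -/
def removeIdx {L : ℕ} (κ : Fin L → ℕ) (ℓ : Fin L) (m : Fin (L - 1)) : ℕ :=
  if (m : ℕ) < (ℓ : ℕ) then κ ⟨m, by have := m.isLt; omega⟩
  else κ ⟨(m : ℕ) + 1, by have := m.isLt; omega⟩

end Multislice

open Real
open scoped BigOperators

lemma sum_filter_lt_eq_sum_Ioi {α M : Type*} [Fintype α] [LinearOrder α] [LocallyFiniteOrderTop α]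
    [AddCommMonoid M] (F : α → α → M) (a : α) (hF : ∀ i j, i < j → i ≠ a → F i j = 0) :
    ∑ p ∈ univ.filter (fun p : α × α => p.1 < p.2), F p.1 p.2 = ∑ j ∈ Ioi a, F a j := by
  rw [sum_filter, Fintype.sum_prod_type, sum_eq_single a, ← sum_filter]
  · simp only [filter_lt_eq_Ioi]
  · intro i _ hi
    exact sum_eq_zero fun j _ => ite_eq_right_iff.2 (hF i j · hi)
  · simp

lemma neg_log_le_of_neg_mul_log_le {p τ : ℝ} (hp0 : 0 < p) (hp1 : p < 1)
    (h : -(p * log p) ≤ τ * (p * (1 - p))) : -log p ≤ τ := by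
  have hlog : 0 < -log p := neg_pos.2 (log_neg hp0 hp1)
  have h' : -log p ≤ τ * (1 - p) := by
    rw [← mul_le_mul_iff_of_pos_left hp0]; linarith
  nlinarith

namespace Multislice

variable {L n : ℕ} {κ : Fin L → ℕ}

lemma mem_slice {ω : Fin n → Fin L} : ω ∈ slice L n κ ↔ ∀ ℓ, #{i | ω i = ℓ} = κ ℓ := by
  simp [slice]

lemma comp_perm_mem_slice {ω : Fin n → Fin L} (hω : ω ∈ slice L n κ) (σ : Equiv.Perm (Fin n)) :
    ω ∘ σ ∈ slice L n κ := by
  rw [mem_slice] at hω ⊢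
  intro ℓ
  rw [← hω ℓ]
  exact card_nbij' σ σ.symm (fun i => by simp) (fun i => by simp) (fun i _ => σ.symm_apply_apply i)
    (fun i _ => σ.apply_symm_apply i)

lemma slice_nonempty (hn : n = ∑ ℓ, κ ℓ) : (slice L n κ).Nonempty := by
  subst hn
  let e := (finSigmaFinEquiv (n := κ)).symm
  refine ⟨fun i => (e i).1, mem_slice.2 fun ℓ => ?_⟩
  calc #{i | (e i).1 = ℓ} = #{s : Σ ℓ, Fin (κ ℓ) | s.1 = ℓ} :=
        card_nbij' e e.symm (fun i => by simp) (fun s => by simp) (fun i _ => e.symm_apply_apply i)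
          (fun s _ => e.apply_symm_apply s)
    _ = κ ℓ := by
        rw [card_filter, ← univ_sigma_univ, sum_sigma]
        simp [apply_ite card]

lemma card_filter_apply_eq_swap (i j : Fin n) (ℓ : Fin L) :
    #{ω ∈ slice L n κ | ω i = ℓ} = #{ω ∈ slice L n κ | ω j = ℓ} := by
  let s : (Fin n → Fin L) → Fin n → Fin L := (· ∘ Equiv.swap i j)
  have hs : ∀ ω, s (s ω) = ω := fun ω => by ext; simp [s]
  refine card_nbij' s s (fun ω hω => ?_) (fun ω hω => ?_) (fun ω _ => hs ω) (fun ω _ => hs ω)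
  · simp only [mem_coe, mem_filter] at hω ⊢
    exact ⟨comp_perm_mem_slice hω.1 _, by simpa [s] using hω.2⟩
  · simp only [mem_coe, mem_filter] at hω ⊢
    exact ⟨comp_perm_mem_slice hω.1 _, by simpa [s] using hω.2⟩

lemma sum_card_filter_apply_eq (ℓ : Fin L) :
    ∑ i, #{ω ∈ slice L n κ | ω i = ℓ} = κ ℓ * #(slice L n κ) := by
  simp_rw [card_filter]
  rw [sum_comm, mul_comm, ← smul_eq_mul, ← sum_const]
  exact sum_congr rfl fun ω hω => by rw [← card_filter, mem_slice.1 hω ℓ]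

lemma card_mul_card_filter_apply_eq (i : Fin n) (ℓ : Fin L) :
    n * #{ω ∈ slice L n κ | ω i = ℓ} = κ ℓ * #(slice L n κ) := by
  rw [← sum_card_filter_apply_eq, sum_congr rfl fun j _ => card_filter_apply_eq_swap j i ℓ]
  simp

lemma expect_eq_finsetExpect (Ω : Finset (Fin n → Fin L)) (f : (Fin n → Fin L) → ℝ) :
    expect Ω f = 𝔼 ω ∈ Ω, f ω :=
  (Finset.expect_eq_sum_div_card Ω f).symm

lemma entropy_of_eq_zero_or_eq_one {Ω : Finset (Fin n → Fin L)} {f : (Fin n → Fin L) → ℝ}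
    (hf : ∀ ω, f ω = 0 ∨ f ω = 1) : entropy Ω f = -(expect Ω f * log (expect Ω f)) := by
  have hzero : (fun ω => f ω * log (f ω)) = 0 := funext fun ω => by rcases hf ω with h | h <;> simp [h]
  simp [entropy, hzero, expect]

def colorIndicator (i : Fin n) (ℓ : Fin L) (ω : Fin n → Fin L) : ℝ := if ω i = ℓ then 1 else 0

lemma colorIndicator_eq_zero_or_eq_one (i : Fin n) (ℓ : Fin L) (ω : Fin n → Fin L) :
    colorIndicator i ℓ ω = 0 ∨ colorIndicator i ℓ ω = 1 := by
  unfold colorIndicator; split_ifs <;> simp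

lemma sqrt_colorIndicator (i : Fin n) (ℓ : Fin L) (ω : Fin n → Fin L) :
    √(colorIndicator i ℓ ω) = colorIndicator i ℓ ω := by
  rcases colorIndicator_eq_zero_or_eq_one i ℓ ω with h | h <;> simp [h]

lemma sum_colorIndicator {ω : Fin n → Fin L} (hω : ω ∈ slice L n κ) (ℓ : Fin L) :
    ∑ j, colorIndicator j ℓ ω = κ ℓ := by
  simp [colorIndicator, sum_boole, mem_slice.1 hω ℓ]

lemma expect_colorIndicator (hn : n = ∑ ℓ, κ ℓ) (i : Fin n) (ℓ : Fin L) :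
    expect (slice L n κ) (colorIndicator i ℓ) = κ ℓ / n := by
  have hn0 : (n : ℝ) ≠ 0 := by exact_mod_cast i.pos.ne'
  have hΩ : (#(slice L n κ) : ℝ) ≠ 0 := by exact_mod_cast (slice_nonempty hn).card_pos.ne'
  have hcount : (n : ℝ) * #{ω ∈ slice L n κ | ω i = ℓ} = κ ℓ * #(slice L n κ) := by
    exact_mod_cast card_mul_card_filter_apply_eq i ℓ
  rw [expect, eq_div_iff hn0, div_mul_eq_mul_div, div_eq_iff hΩ, mul_comm, ← hcount]
  simp [colorIndicator, sum_boole]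

lemma grad_colorIndicator (i j i₀ : Fin n) (ℓ : Fin L) (ω : Fin n → Fin L) :
    grad i j (colorIndicator i₀ ℓ) ω
      = colorIndicator (Equiv.swap i j i₀) ℓ ω - colorIndicator i₀ ℓ ω :=
  rfl

/-- Since `i₀` is the least coordinate, only the transpositions `(i₀ j)` can change the value of
`colorIndicator i₀ ℓ` along a pair `i < j`. -/
lemma sum_grad_mul_grad_colorIndicator {i₀ : Fin n} (hi₀ : ∀ i, i₀ ≤ i) (ℓ : Fin L)
    {ω : Fin n → Fin L} (hω : ω ∈ slice L n κ) :
    ∑ p ∈ univ.filter (fun p : Fin n × Fin n => p.1 < p.2),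
        grad p.1 p.2 (colorIndicator i₀ ℓ) ω * grad p.1 p.2 (colorIndicator i₀ ℓ) ω
      = κ ℓ + (n - 2 * κ ℓ) * colorIndicator i₀ ℓ ω := by
  set g := fun j => colorIndicator j ℓ ω
  have hg : ∀ j, g j * g j = g j := fun j => by
    rcases colorIndicator_eq_zero_or_eq_one j ℓ ω with h | h <;> simp [g, h]
  have hsq : ∀ j, (g j - g i₀) * (g j - g i₀) = g j * (1 - 2 * g i₀) + g i₀ := fun j => by
    linear_combination hg j + hg i₀
  rw [sum_filter_lt_eq_sum_Ioi
      (fun i j => grad i j (colorIndicator i₀ ℓ) ω * grad i j (colorIndicator i₀ ℓ) ω) i₀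
      fun i j hij hi => ?_,
    sum_subset (subset_univ (Ioi i₀)) fun j _ hj => ?_]
  · simp only [grad_colorIndicator, Equiv.swap_apply_left]
    rw [sum_congr rfl fun j _ => hsq j, sum_add_distrib, ← sum_mul, sum_colorIndicator hω]
    simp only [sum_const, card_univ, Fintype.card_fin, nsmul_eq_mul, g]
    ring
  · obtain rfl : j = i₀ := le_antisymm (not_lt.1 (by simpa using hj)) (hi₀ j)
    simp [grad]
  · have hj : j ≠ i₀ := ((hi₀ i).trans_lt hij).ne'
    simp [grad_colorIndicator, Equiv.swap_apply_of_ne_of_ne (Ne.symm hi) (Ne.symm hj)]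

lemma dirichlet_colorIndicator (hn : n = ∑ ℓ, κ ℓ) {i₀ : Fin n} (hi₀ : ∀ i, i₀ ≤ i) (ℓ : Fin L) :
    dirichlet (slice L n κ) (colorIndicator i₀ ℓ) (colorIndicator i₀ ℓ)
      = κ ℓ / n * (1 - κ ℓ / n) := by
  have hn0 : (n : ℝ) ≠ 0 := by exact_mod_cast i₀.pos.ne'
  have hE : expect (slice L n κ) (fun ω => κ ℓ + (n - 2 * κ ℓ) * colorIndicator i₀ ℓ ω)
      = κ ℓ + (n - 2 * κ ℓ) * (κ ℓ / n) := by
    rw [expect_eq_finsetExpect, expect_add_distrib, expect_const (slice_nonempty hn), ← mul_expect,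
      ← expect_eq_finsetExpect, expect_colorIndicator hn]
  rw [dirichlet]
  simp_rw [expect_eq_finsetExpect]
  rw [← expect_sum_comm,
    expect_congr rfl fun ω hω => sum_grad_mul_grad_colorIndicator hi₀ ℓ hω,
    ← expect_eq_finsetExpect, hE]
  field_simp
  ring

theorem multislice_logSobolev_lower_general
    (L : ℕ) (hL : 2 ≤ L) (κ : Fin L → ℕ) (hκ : ∀ ℓ, 0 < κ ℓ)
    (n : ℕ) (hn : n = ∑ ℓ, κ ℓ)
    (κmin : ℕ) (hmem : ∃ ℓ, κ ℓ = κmin)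
    (τ : ℝ)
    (hτ : ∀ f : (Fin n → Fin L) → ℝ, (∀ ω, 0 ≤ f ω) →
      entropy (slice L n κ) f ≤
        τ * dirichlet (slice L n κ)
          (fun ω => Real.sqrt (f ω)) (fun ω => Real.sqrt (f ω))) :
    Real.log ((n : ℝ) / (κmin : ℝ)) ≤ τ := by
  obtain ⟨ℓ, rfl⟩ := hmem
  have hlt : κ ℓ < n := by
    obtain ⟨j, hj⟩ := @exists_ne _ (Fin.nontrivial_iff_two_le.2 hL) ℓ
    rw [hn]
    exact single_lt_sum hj (mem_univ ℓ) (mem_univ j) (hκ j) fun _ _ _ => Nat.zero_le _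
  let i₀ : Fin n := ⟨0, (Nat.zero_le _).trans_lt hlt⟩
  have key := hτ (colorIndicator i₀ ℓ) fun ω => by
    rcases colorIndicator_eq_zero_or_eq_one i₀ ℓ ω with h | h <;> simp [h]
  simp only [sqrt_colorIndicator] at key
  rw [entropy_of_eq_zero_or_eq_one (colorIndicator_eq_zero_or_eq_one i₀ ℓ),
    expect_colorIndicator hn, dirichlet_colorIndicator hn (fun i => Nat.zero_le i.1) ℓ] at key
  have hκℓ : (0 : ℝ) < κ ℓ := by exact_mod_cast hκ ℓ
  have hκn : (κ ℓ : ℝ) < n := by exact_mod_cast hlt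
  rw [← inv_div, log_inv]
  exact neg_log_le_of_neg_mul_log_le (div_pos hκℓ (hκℓ.trans hκn))
    ((div_lt_one (hκℓ.trans hκn)).2 hκn) key

/-- every valid log-Sobolev constant of the multislice is at
least `log(n/κ_min)`. -/
theorem multislice_logSobolev_lower
    (L : ℕ) (hL : 2 ≤ L) (κ : Fin L → ℕ) (hκ : ∀ ℓ, 0 < κ ℓ)
    (n : ℕ) (hn : n = ∑ ℓ, κ ℓ)
    (κmin : ℕ) (hmin : ∀ ℓ, κmin ≤ κ ℓ) (hmem : ∃ ℓ, κ ℓ = κmin)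
    (τ : ℝ)
    (hτ : ∀ f : (Fin n → Fin L) → ℝ, (∀ ω, 0 ≤ f ω) →
      entropy (slice L n κ) f ≤
        τ * dirichlet (slice L n κ)
          (fun ω => Real.sqrt (f ω)) (fun ω => Real.sqrt (f ω))) :
    Real.log ((n : ℝ) / (κmin : ℝ)) ≤ τ :=
  multislice_logSobolev_lower_general L hL κ hκ n hn κmin hmem τ hτ

end Multislice
end

section
/- The modified log-Sobolev inequality holds on the multislice Ω_κ with constant 2: for every strictly positive function f : Ω_κ → (0,∞), Ent_κ(f) ≤ 2·𝔈_κ(f, log f). -/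
/-!
Induction on the set `A` of free coordinates (all others pinned) of
`Ent f ≤ E[(2|A|)⁻¹ Σ_{i,j ∈ A} (∇^{ij} f)(∇^{ij} log f)]`; for `A = univ` the right side is
`2 𝔈(f, log f)`. For a free coordinate `k`, the chain rule splits `Ent f` into the average
entropy on the fibres `{ω_k = ℓ}`, which are pinned multislices with free set `A \ {k}`, and the
entropy of `g = E[f | ω_k]`. The latter is at most `Cov(g, log g)`, and the log-sum inequality
along the involution `ω ↦ ω ∘ (k j)`, which exchanges `{ω_k = ℓ, ω_j = ℓ'}` and
`{ω_k = ℓ', ω_j = ℓ}`, bounds it by the transpositions through `k`. Averaging over `k ∈ A`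
closes the induction.
-/

open Finset

namespace Multislice

section LogInequalities

open Real

variable {ι : Type*}

lemma sub_mul_log_sub_log_nonneg {a b : ℝ} (ha : 0 < a) (hb : 0 < b) :
    0 ≤ (a - b) * (log a - log b) := by
  rcases le_total a b with h | h
  · exact mul_nonneg_of_nonpos_of_nonpos (sub_nonpos.2 h) (sub_nonpos.2 (log_le_log ha h))
  · exact mul_nonneg (sub_nonneg.2 h) (sub_nonneg.2 (log_le_log hb h))

lemma sub_mul_log_sub_log_mul_left {c a b : ℝ} (hc : 0 < c) (ha : 0 < a) (hb : 0 < b) :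
    (c * a - c * b) * (log (c * a) - log (c * b)) = c * ((a - b) * (log a - log b)) := by
  rw [log_mul hc.ne' ha.ne', log_mul hc.ne' hb.ne']
  ring

/-- The log-sum inequality. -/
lemma sum_mul_log_sub_log_le (s : Finset ι) (a b : ι → ℝ) (ha : ∀ i ∈ s, 0 < a i)
    (hb : ∀ i ∈ s, 0 < b i) :
    (∑ i ∈ s, a i) * (log (∑ i ∈ s, a i) - log (∑ i ∈ s, b i)) ≤
      ∑ i ∈ s, a i * (log (a i) - log (b i)) := by
  rcases s.eq_empty_or_nonempty with rfl | hs
  · simp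
  set A := ∑ i ∈ s, a i
  set B := ∑ i ∈ s, b i
  have hA : 0 < A := Finset.sum_pos ha hs
  have hB : 0 < B := Finset.sum_pos hb hs
  -- `log x ≤ x - 1` at `x = A b i / (B a i)`, summed over `i`
  have key : ∀ i ∈ s, a i * (log A - log B) - a i * (log (a i) - log (b i)) ≤
      A / B * b i - a i := by
    intro i hi
    have hai := ha i hi
    have hbi := hb i hi
    have h := log_le_sub_one_of_pos (show 0 < A * b i / (B * a i) by positivity)
    rw [log_div (by positivity) (by positivity), log_mul hA.ne' hbi.ne',
      log_mul hB.ne' hai.ne'] at h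
    have h' := mul_le_mul_of_nonneg_left h hai.le
    have e : a i * (A * b i / (B * a i) - 1) = A / B * b i - a i := by
      field_simp
    linarith
  have hsum := Finset.sum_le_sum key
  rw [Finset.sum_sub_distrib, Finset.sum_sub_distrib, ← Finset.sum_mul, ← Finset.mul_sum,
    div_mul_cancel₀ _ hB.ne', sub_self] at hsum
  linarith

lemma sub_mul_log_sub_log_sum_le (s : Finset ι) (a b : ι → ℝ) (ha : ∀ i ∈ s, 0 < a i)
    (hb : ∀ i ∈ s, 0 < b i) :
    (∑ i ∈ s, a i - ∑ i ∈ s, b i) * (log (∑ i ∈ s, a i) - log (∑ i ∈ s, b i)) ≤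
      ∑ i ∈ s, (a i - b i) * (log (a i) - log (b i)) :=
  calc _ = (∑ i ∈ s, a i) * (log (∑ i ∈ s, a i) - log (∑ i ∈ s, b i)) +
        (∑ i ∈ s, b i) * (log (∑ i ∈ s, b i) - log (∑ i ∈ s, a i)) := by ring
    _ ≤ ∑ i ∈ s, a i * (log (a i) - log (b i)) + ∑ i ∈ s, b i * (log (b i) - log (a i)) :=
        add_le_add (sum_mul_log_sub_log_le s a b ha hb) (sum_mul_log_sub_log_le s b a hb ha)
    _ = _ := by
        rw [← Finset.sum_add_distrib]
        exact Finset.sum_congr rfl fun i _ => by ring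

lemma sum_sum_sub_mul_sub (s : Finset ι) (x y : ι → ℝ) :
    ∑ i ∈ s, ∑ j ∈ s, (x i - x j) * (y i - y j) =
      2 * (s.card * ∑ i ∈ s, x i * y i - (∑ i ∈ s, x i) * ∑ i ∈ s, y i) := by
  have e : ∀ i j, (x i - x j) * (y i - y j) = x i * y i + x j * y j - x i * y j - y i * x j :=
    fun i j => by ring
  simp only [e, Finset.sum_add_distrib, Finset.sum_sub_distrib, Finset.sum_const,
    ← Finset.mul_sum, ← Finset.sum_mul, nsmul_eq_mul]
  ring

end LogInequalities

section Expectation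

open Real

variable {L n : ℕ} {Ω : Finset (Fin n → Fin L)}

lemma card_mul_expect (Ω : Finset (Fin n → Fin L)) (X : (Fin n → Fin L) → ℝ) :
    (Ω.card : ℝ) * expect Ω X = ∑ ω ∈ Ω, X ω := by
  rcases Ω.eq_empty_or_nonempty with rfl | hΩ
  · simp
  · exact mul_div_cancel₀ _ (Nat.cast_ne_zero.2 hΩ.card_pos.ne')

lemma expect_mono {X Y : (Fin n → Fin L) → ℝ} (h : ∀ ω ∈ Ω, X ω ≤ Y ω) :
    expect Ω X ≤ expect Ω Y :=
  div_le_div_of_nonneg_right (Finset.sum_le_sum h) (Nat.cast_nonneg _)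

lemma expect_add (Ω : Finset (Fin n → Fin L)) (X Y : (Fin n → Fin L) → ℝ) :
    expect Ω (fun ω => X ω + Y ω) = expect Ω X + expect Ω Y := by
  simp only [expect, Finset.sum_add_distrib, add_div]

lemma expect_sub (Ω : Finset (Fin n → Fin L)) (X Y : (Fin n → Fin L) → ℝ) :
    expect Ω (fun ω => X ω - Y ω) = expect Ω X - expect Ω Y := by
  simp only [expect, Finset.sum_sub_distrib, sub_div]

lemma expect_sum {ι : Type*} (Ω : Finset (Fin n → Fin L)) (s : Finset ι)
    (X : ι → (Fin n → Fin L) → ℝ) :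
    expect Ω (fun ω => ∑ i ∈ s, X i ω) = ∑ i ∈ s, expect Ω (X i) := by
  simp only [expect, Finset.sum_div]
  exact Finset.sum_comm

lemma expect_const_mul (Ω : Finset (Fin n → Fin L)) (c : ℝ) (X : (Fin n → Fin L) → ℝ) :
    expect Ω (fun ω => c * X ω) = c * expect Ω X := by
  simp only [expect, ← Finset.mul_sum, mul_div_assoc]

lemma expect_div_const (Ω : Finset (Fin n → Fin L)) (X : (Fin n → Fin L) → ℝ) (c : ℝ) :
    expect Ω (fun ω => X ω / c) = expect Ω X / c := by
  simp only [expect, ← Finset.sum_div, div_right_comm _ c]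

lemma expect_pos (hΩ : Ω.Nonempty) {X : (Fin n → Fin L) → ℝ} (hX : ∀ ω ∈ Ω, 0 < X ω) :
    0 < expect Ω X :=
  div_pos (Finset.sum_pos hX hΩ) (Nat.cast_pos.2 hΩ.card_pos)

lemma entropy_eq_zero_of_card_le_one (f : (Fin n → Fin L) → ℝ) (hΩ : Ω.card ≤ 1) :
    entropy Ω f = 0 := by
  rcases Nat.le_one_iff_eq_zero_or_eq_one.1 hΩ with h | h
  · simp [Finset.card_eq_zero.1 h, entropy, expect]
  · obtain ⟨ω, rfl⟩ := Finset.card_eq_one.1 h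
    simp [entropy, expect]

lemma expect_log_le_log_expect (hΩ : Ω.Nonempty) {g : (Fin n → Fin L) → ℝ}
    (hg : ∀ ω ∈ Ω, 0 < g ω) :
    expect Ω (fun ω => log (g ω)) ≤ log (expect Ω g) := by
  have hN : (Ω.card : ℝ) ≠ 0 := Nat.cast_ne_zero.2 hΩ.card_pos.ne'
  have hw : ∑ _ω ∈ Ω, (Ω.card : ℝ)⁻¹ = 1 := by simp [hN]
  have := strictConcaveOn_log_Ioi.concaveOn.le_map_sum (fun _ _ => inv_nonneg.2
    (Nat.cast_nonneg _)) hw hg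
  simpa only [expect, smul_eq_mul, inv_mul_eq_div, Finset.sum_div] using this

/-- `Ent(g) ≤ Cov(g, log g)`, by Jensen's inequality for `log`. -/
lemma entropy_le_sum_sum {g : (Fin n → Fin L) → ℝ} (hg : ∀ ω ∈ Ω, 0 < g ω) :
    entropy Ω g ≤ (∑ ω ∈ Ω, ∑ ω' ∈ Ω, (g ω - g ω') * (log (g ω) - log (g ω'))) /
      (2 * Ω.card ^ 2) := by
  rcases Ω.eq_empty_or_nonempty with rfl | hΩ
  · simp [entropy, expect]
  have jensen := mul_le_mul_of_nonneg_left (expect_log_le_log_expect hΩ hg)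
    (expect_pos hΩ hg).le
  rw [sum_sum_sub_mul_sub, entropy]
  simp only [expect] at jensen ⊢
  rw [le_div_iff₀ (by positivity)]
  field_simp at jensen ⊢
  nlinarith [jensen]

noncomputable def condExpect {β : Type*} [DecidableEq β] (Ω : Finset (Fin n → Fin L))
    (proj : (Fin n → Fin L) → β) (X : (Fin n → Fin L) → ℝ) (ω : Fin n → Fin L) : ℝ :=
  expect (Ω.filter fun ω' => proj ω' = proj ω) X

variable {β : Type*} [DecidableEq β]

lemma expect_condExpect (Ω : Finset (Fin n → Fin L)) (proj : (Fin n → Fin L) → β)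
    (X : (Fin n → Fin L) → ℝ) : expect Ω (condExpect Ω proj X) = expect Ω X := by
  unfold expect
  congr 1
  calc ∑ ω ∈ Ω, condExpect Ω proj X ω
      = ∑ b ∈ Ω.image proj, ∑ ω ∈ Ω with proj ω = b, expect (Ω.filter fun ω' => proj ω' = b) X :=
        (Finset.sum_fiberwise_of_maps_to' (fun _ => Finset.mem_image_of_mem proj)
          fun b => expect (Ω.filter fun ω' => proj ω' = b) X).symm
    _ = ∑ b ∈ Ω.image proj, ∑ ω ∈ Ω with proj ω = b, X ω := by
        refine Finset.sum_congr rfl fun b _ => ?_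
        rw [Finset.sum_const, nsmul_eq_mul, card_mul_expect]
    _ = ∑ ω ∈ Ω, X ω := Finset.sum_fiberwise_of_maps_to (fun _ => Finset.mem_image_of_mem proj) _

lemma entropy_eq_expect_entropy_add (Ω : Finset (Fin n → Fin L)) (proj : (Fin n → Fin L) → β)
    (f : (Fin n → Fin L) → ℝ) :
    entropy Ω f = expect Ω (fun ω => entropy (Ω.filter fun ω' => proj ω' = proj ω) f) +
      entropy Ω (condExpect Ω proj f) := by
  have h := expect_sub Ω (condExpect Ω proj fun ω => f ω * log (f ω))
    (fun ω => condExpect Ω proj f ω * log (condExpect Ω proj f ω))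
  simp only [entropy, condExpect] at h ⊢
  simp only [expect_condExpect] at h
  rw [h, expect_condExpect]
  ring

end Expectation

section Conditioning

variable {L n : ℕ} {κ : Fin L → ℕ} {A : Finset (Fin n)} {τ ω ω₀ : Fin n → Fin L} {k : Fin n}

def condSlice (L n : ℕ) (κ : Fin L → ℕ) (A : Finset (Fin n)) (τ : Fin n → Fin L) :
    Finset (Fin n → Fin L) :=
  (slice L n κ).filter fun ω => ∀ t ∉ A, ω t = τ t

lemma condSlice_univ (τ : Fin n → Fin L) : condSlice L n κ univ τ = slice L n κ :=
  Finset.filter_true_of_mem fun _ _ t ht => absurd (mem_univ t) ht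

lemma card_condSlice_empty_le_one : (condSlice L n κ ∅ τ).card ≤ 1 :=
  Finset.card_le_one.2 fun _ ha _ hb => funext fun t => by
    rw [(mem_filter.1 ha).2 t (notMem_empty t), (mem_filter.1 hb).2 t (notMem_empty t)]

lemma filter_condSlice_eq (hk : k ∈ A) (ℓ : Fin L) :
    (condSlice L n κ A τ).filter (fun ω => ω k = ℓ) =
      condSlice L n κ (A.erase k) (Function.update τ k ℓ) := by
  ext ω
  simp only [condSlice, mem_filter, mem_erase, ne_eq, not_and, and_assoc]
  refine and_congr_right fun _ => ⟨fun ⟨h, hωk⟩ t ht => ?_, fun h => ⟨fun t ht => ?_, ?_⟩⟩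
  · by_cases htk : t = k
    · rw [htk, Function.update_self, hωk]
    · rw [Function.update_of_ne htk]
      exact h t (ht htk)
  · have htk : t ≠ k := fun htk => ht (htk ▸ hk)
    rw [h t fun _ => ht, Function.update_of_ne htk]
  · simpa using h k

lemma comp_swap_mem_slice (hω : ω ∈ slice L n κ) (i j : Fin n) :
    ω ∘ Equiv.swap i j ∈ slice L n κ := by
  simp only [slice, mem_filter, mem_univ, true_and, Function.comp_apply] at hω ⊢
  intro ℓ
  rw [← hω ℓ]
  exact Finset.card_nbij' (Equiv.swap i j) (Equiv.swap i j) (fun x hx => by simpa using hx)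
    (fun x hx => by simpa using hx) (fun x _ => by simp) (fun x _ => by simp)

lemma comp_swap_mem_condSlice (hω : ω ∈ condSlice L n κ A τ) {i j : Fin n} (hi : i ∈ A)
    (hj : j ∈ A) : ω ∘ Equiv.swap i j ∈ condSlice L n κ A τ := by
  rw [condSlice, mem_filter] at hω ⊢
  refine ⟨comp_swap_mem_slice hω.1 i j, fun t ht => ?_⟩
  rw [Function.comp_apply, Equiv.swap_apply_of_ne_of_ne (ne_of_mem_of_not_mem hi ht).symm
    (ne_of_mem_of_not_mem hj ht).symm]
  exact hω.2 t ht

lemma card_filter_add_card_filter_compl (hω : ω ∈ condSlice L n κ A τ) (ℓ : Fin L) :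
    {j ∈ A | ω j = ℓ}.card + {j ∈ Aᶜ | τ j = ℓ}.card = κ ℓ := by
  rw [condSlice, mem_filter, slice, mem_filter] at hω
  rw [← hω.1.2 ℓ, card_filter, card_filter, card_filter, ← Finset.sum_add_sum_compl A]
  congr 1
  exact Finset.sum_congr rfl fun j hj => by rw [hω.2 j (mem_compl.1 hj)]

lemma card_filter_eq_of_mem_condSlice (hω : ω ∈ condSlice L n κ A τ)
    (hω₀ : ω₀ ∈ condSlice L n κ A τ) (ℓ : Fin L) :
    {j ∈ A | ω j = ℓ}.card = {j ∈ A | ω₀ j = ℓ}.card := by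
  have := card_filter_add_card_filter_compl hω ℓ
  have := card_filter_add_card_filter_compl hω₀ ℓ
  omega

lemma sum_sum_filter_eq_card_mul {s : Finset (Fin n → Fin L)} (hs : s ⊆ condSlice L n κ A τ)
    (hω₀ : ω₀ ∈ condSlice L n κ A τ) (g : (Fin n → Fin L) → ℝ) (ℓ : Fin L) :
    ∑ ω ∈ s, ∑ j ∈ A with ω j = ℓ, g ω = {j ∈ A | ω₀ j = ℓ}.card * ∑ ω ∈ s, g ω := by
  rw [Finset.mul_sum]
  refine Finset.sum_congr rfl fun ω hω => ?_
  rw [Finset.sum_const, nsmul_eq_mul, card_filter_eq_of_mem_condSlice (hs hω) hω₀]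

/-- Swapping a coordinate `k` of color `ℓ` with a free coordinate `j` of color `ℓ'` is an
involution exchanging the roles of the two colors. -/
lemma sum_sum_comp_swap {M : Type*} [AddCommMonoid M] (hk : k ∈ A)
    (g : (Fin n → Fin L) → M) (ℓ ℓ' : Fin L) :
    ∑ ω ∈ condSlice L n κ A τ with ω k = ℓ, ∑ j ∈ A with ω j = ℓ', g (ω ∘ Equiv.swap k j) =
      ∑ ω ∈ condSlice L n κ A τ with ω k = ℓ', ∑ j ∈ A with ω j = ℓ, g ω := by
  have maps : ∀ {ℓ ℓ' : Fin L} (p : Σ _ : Fin n → Fin L, Fin n),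
      p ∈ ({ω ∈ condSlice L n κ A τ | ω k = ℓ}).sigma (fun ω => {j ∈ A | ω j = ℓ'}) →
      (⟨p.1 ∘ Equiv.swap k p.2, p.2⟩ : Σ _ : Fin n → Fin L, Fin n) ∈
        ({ω ∈ condSlice L n κ A τ | ω k = ℓ'}).sigma (fun ω => {j ∈ A | ω j = ℓ}) := by
    rintro ℓ ℓ' ⟨ω, j⟩ hp
    simp only [mem_sigma, mem_filter] at hp ⊢
    obtain ⟨⟨hω, hωk⟩, hj, hωj⟩ := hp
    simpa [hωk, hωj, hj] using comp_swap_mem_condSlice hω hk hj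
  rw [Finset.sum_sigma', Finset.sum_sigma']
  exact Finset.sum_nbij' (fun p => ⟨p.1 ∘ Equiv.swap k p.2, p.2⟩)
    (fun p => ⟨p.1 ∘ Equiv.swap k p.2, p.2⟩) (fun p hp => maps p hp) (fun p hp => maps p hp)
    (fun _ _ => by simp only [Function.comp_def, Equiv.swap_apply_self])
    (fun _ _ => by simp only [Function.comp_def, Equiv.swap_apply_self])
    fun p _ => rfl

lemma card_mul_card_filter (hk : k ∈ A) (hω₀ : ω₀ ∈ condSlice L n κ A τ) (ℓ : Fin L) :
    A.card * {ω ∈ condSlice L n κ A τ | ω k = ℓ}.card =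
      {j ∈ A | ω₀ j = ℓ}.card * (condSlice L n κ A τ).card := by
  have h := Finset.sum_congr rfl fun ℓ' (_ : ℓ' ∈ univ) =>
    sum_sum_comp_swap (M := ℕ) (κ := κ) (τ := τ) hk (fun _ => 1) ℓ ℓ'
  rw [Finset.sum_comm, Finset.sum_fiberwise] at h
  simp only [Finset.sum_fiberwise] at h
  simp only [Finset.sum_const, smul_eq_mul, mul_one] at h
  rw [mul_comm, h, Finset.sum_congr rfl fun ω hω => card_filter_eq_of_mem_condSlice hω hω₀ ℓ,
    Finset.sum_const, smul_eq_mul, mul_comm]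

end Conditioning

section Production

open Real

variable {L n : ℕ} {κ : Fin L → ℕ} {A : Finset (Fin n)} {τ ω₀ : Fin n → Fin L} {k : Fin n}
  {ℓ ℓ' : Fin L} {f : (Fin n → Fin L) → ℝ}

noncomputable def entropyProduction (f : (Fin n → Fin L) → ℝ) (i j : Fin n)
    (ω : Fin n → Fin L) : ℝ :=
  grad i j f ω * grad i j (fun ω => log (f ω)) ω

lemma entropyProduction_nonneg (hf : ∀ ω, 0 < f ω) (i j : Fin n) (ω : Fin n → Fin L) :
    0 ≤ entropyProduction f i j ω :=
  sub_mul_log_sub_log_nonneg (hf _) (hf _)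

lemma entropyProduction_comm (f : (Fin n → Fin L) → ℝ) (i j : Fin n) :
    entropyProduction f i j = entropyProduction f j i := by
  funext ω
  rw [entropyProduction, entropyProduction, grad, grad, grad, grad, Equiv.swap_comm]

lemma entropyProduction_self (f : (Fin n → Fin L) → ℝ) (i : Fin n) :
    entropyProduction f i i = 0 := by
  funext ω
  simp [entropyProduction, grad]

lemma dirichlet_log_eq (Ω : Finset (Fin n → Fin L)) (f : (Fin n → Fin L) → ℝ) :
    dirichlet Ω f (fun ω => log (f ω)) = 1 / (2 * n) *
      ∑ p ∈ univ.filter (fun p : Fin n × Fin n => p.1 < p.2),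
        expect Ω (entropyProduction f p.1 p.2) :=
  rfl

/-- The log-sum inequality over the pairs `(ω, j)`: by `sum_sum_comp_swap` and
`card_mul_card_filter`, the totals of `f ∘ swap k j` and of `f` are `G'` and `G` times the
same factor. -/
lemma mul_sub_mul_log_sub_log_expect_le (hf : ∀ ω, 0 < f ω) (hk : k ∈ A)
    (hω₀ : ω₀ ∈ {ω ∈ condSlice L n κ A τ | ω k = ℓ})
    (hne : {ω ∈ condSlice L n κ A τ | ω k = ℓ'}.Nonempty) :
    let G := expect {ω ∈ condSlice L n κ A τ | ω k = ℓ} f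
    let G' := expect {ω ∈ condSlice L n κ A τ | ω k = ℓ'} f
    ({j ∈ A | ω₀ j = ℓ'}.card * {ω ∈ condSlice L n κ A τ | ω k = ℓ}.card : ℝ) *
        ((G' - G) * (log G' - log G)) ≤
      ∑ ω ∈ condSlice L n κ A τ with ω k = ℓ, ∑ j ∈ A with ω j = ℓ',
        entropyProduction f k j ω := by
  intro G G'
  set Ω := condSlice L n κ A τ
  have hω₀Ω : ω₀ ∈ Ω := (mem_filter.1 hω₀).1
  have ha := congrArg (Nat.cast : ℕ → ℝ) (card_mul_card_filter hk hω₀Ω ℓ)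
  have hb := congrArg (Nat.cast : ℕ → ℝ) (card_mul_card_filter hk hω₀Ω ℓ')
  push_cast at ha hb
  set a : ℝ := (({ω ∈ Ω | ω k = ℓ}.card : ℕ) : ℝ)
  set b : ℝ := (({ω ∈ Ω | ω k = ℓ'}.card : ℕ) : ℝ)
  set c : ℝ := (({j ∈ A | ω₀ j = ℓ}.card : ℕ) : ℝ)
  set c' : ℝ := (({j ∈ A | ω₀ j = ℓ'}.card : ℕ) : ℝ)
  have hcross : c * b = c' * a := by
    refine mul_right_cancel₀ (Nat.cast_pos.2 (Finset.card_pos.2 ⟨ω₀, hω₀Ω⟩)).ne' ?_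
    linear_combination (-b) * ha + a * hb
  have hM : 0 < c' * a := by
    have : 0 < c' * Ω.card := hb ▸ mul_pos (Nat.cast_pos.2 (Finset.card_pos.2 ⟨k, hk⟩))
      (Nat.cast_pos.2 hne.card_pos)
    exact mul_pos (pos_of_mul_pos_left this (Nat.cast_nonneg _))
      (Nat.cast_pos.2 (Finset.card_pos.2 ⟨ω₀, hω₀⟩))
  have hy : ∑ ω ∈ Ω with ω k = ℓ, ∑ j ∈ A with ω j = ℓ', f ω = c' * a * G := by
    rw [sum_sum_filter_eq_card_mul (filter_subset _ _) hω₀Ω, ← card_mul_expect, mul_assoc]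
  have hx : ∑ ω ∈ Ω with ω k = ℓ, ∑ j ∈ A with ω j = ℓ', f (ω ∘ Equiv.swap k j) =
      c' * a * G' := by
    rw [sum_sum_comp_swap hk, sum_sum_filter_eq_card_mul (filter_subset _ _) hω₀Ω,
      ← card_mul_expect, ← mul_assoc, hcross]
  have hlogsum := sub_mul_log_sub_log_sum_le
    ({ω ∈ Ω | ω k = ℓ}.sigma fun ω => {j ∈ A | ω j = ℓ'})
    (fun p => f (p.1 ∘ Equiv.swap k p.2)) (fun p => f p.1) (fun _ _ => hf _) (fun _ _ => hf _)
  simp only [Finset.sum_sigma] at hlogsum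
  rwa [hx, hy, sub_mul_log_sub_log_mul_left hM (expect_pos hne fun _ _ => hf _)
    (expect_pos ⟨ω₀, hω₀⟩ fun _ _ => hf _)] at hlogsum

lemma card_mul_sum_filter_sum_filter_le (hf : ∀ ω, 0 < f ω) (hk : k ∈ A) (ℓ ℓ' : Fin L) :
    let Ω := condSlice L n κ A τ
    let g := condExpect Ω (fun ω => ω k) f
    A.card * ∑ ω ∈ Ω with ω k = ℓ, ∑ ω' ∈ Ω with ω' k = ℓ',
        (g ω - g ω') * (log (g ω) - log (g ω')) ≤
      Ω.card * ∑ ω ∈ Ω with ω k = ℓ, ∑ j ∈ A with ω j = ℓ', entropyProduction f k j ω := by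
  intro Ω g
  by_cases hne : {ω ∈ Ω | ω k = ℓ}.Nonempty ∧ {ω ∈ Ω | ω k = ℓ'}.Nonempty
  swap
  · rcases not_and_or.1 hne with h | h
    · simp [Finset.not_nonempty_iff_eq_empty.1 h]
    · simpa [Finset.not_nonempty_iff_eq_empty.1 h] using mul_nonneg (Nat.cast_nonneg _)
        (Finset.sum_nonneg fun _ _ => Finset.sum_nonneg fun _ _ =>
          entropyProduction_nonneg hf k _ _)
  obtain ⟨⟨ω₀, hω₀⟩, hne'⟩ := hne
  have hb := congrArg (Nat.cast : ℕ → ℝ) (card_mul_card_filter hk (mem_filter.1 hω₀).1 ℓ')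
  push_cast at hb
  set G := expect {ω ∈ Ω | ω k = ℓ} f
  set G' := expect {ω ∈ Ω | ω k = ℓ'} f
  have hg : ∀ ℓ'', ∀ ω ∈ {ω ∈ Ω | ω k = ℓ''}, g ω = expect {ω ∈ Ω | ω k = ℓ''} f :=
    fun ℓ'' ω hω => by simp only [g, condExpect, (mem_filter.1 hω).2]
  calc A.card * ∑ ω ∈ Ω with ω k = ℓ, ∑ ω' ∈ Ω with ω' k = ℓ',
        (g ω - g ω') * (log (g ω) - log (g ω'))
      = A.card * ({ω ∈ Ω | ω k = ℓ}.card * ({ω ∈ Ω | ω k = ℓ'}.card *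
          ((G - G') * (log G - log G')))) := by
        rw [Finset.sum_congr rfl fun ω hω => Finset.sum_congr rfl fun ω' hω' => by
          rw [hg ℓ ω hω, hg ℓ' ω' hω']]
        simp only [Finset.sum_const, nsmul_eq_mul]
        rfl
    _ = Ω.card * ({j ∈ A | ω₀ j = ℓ'}.card * {ω ∈ Ω | ω k = ℓ}.card *
          ((G' - G) * (log G' - log G))) := by
        linear_combination ({ω ∈ Ω | ω k = ℓ}.card * ((G - G') * (log G - log G'))) * hb
    _ ≤ _ := mul_le_mul_of_nonneg_left (mul_sub_mul_log_sub_log_expect_le hf hk hω₀ hne')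
          (Nat.cast_nonneg _)

lemma card_mul_sum_sum_condExpect_le (hf : ∀ ω, 0 < f ω) (hk : k ∈ A) :
    let Ω := condSlice L n κ A τ
    let g := condExpect Ω (fun ω => ω k) f
    A.card * ∑ ω ∈ Ω, ∑ ω' ∈ Ω, (g ω - g ω') * (log (g ω) - log (g ω')) ≤
      Ω.card * ∑ ω ∈ Ω, ∑ j ∈ A, entropyProduction f k j ω := by
  intro Ω g
  have hsplit : ∀ F : (Fin n → Fin L) → (Fin n → Fin L) → ℝ, ∑ ω ∈ Ω, ∑ ω' ∈ Ω, F ω ω' =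
      ∑ ℓ, ∑ ℓ', ∑ ω ∈ Ω with ω k = ℓ, ∑ ω' ∈ Ω with ω' k = ℓ', F ω ω' := by
    intro F
    rw [← Finset.sum_fiberwise Ω (fun ω => ω k)]
    refine Finset.sum_congr rfl fun ℓ _ => ?_
    rw [Finset.sum_comm, ← Finset.sum_fiberwise Ω (fun ω => ω k)]
    exact Finset.sum_congr rfl fun ℓ' _ => Finset.sum_comm
  have hsplit' : ∑ ω ∈ Ω, ∑ j ∈ A, entropyProduction f k j ω =
      ∑ ℓ, ∑ ℓ', ∑ ω ∈ Ω with ω k = ℓ, ∑ j ∈ A with ω j = ℓ', entropyProduction f k j ω := by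
    rw [← Finset.sum_fiberwise Ω (fun ω => ω k)]
    refine Finset.sum_congr rfl fun ℓ _ => ?_
    exact (Finset.sum_congr rfl fun ω _ =>
      (Finset.sum_fiberwise A ω fun j => entropyProduction f k j ω).symm).trans Finset.sum_comm
  rw [hsplit, hsplit', Finset.mul_sum, Finset.mul_sum]
  refine Finset.sum_le_sum fun ℓ _ => ?_
  rw [Finset.mul_sum, Finset.mul_sum]
  exact Finset.sum_le_sum fun ℓ' _ => card_mul_sum_filter_sum_filter_le hf hk ℓ ℓ'

end Production

section Averaging

variable {ι : Type*}

lemma sum_sum_erase_sum_erase [DecidableEq ι] (A : Finset ι) (H : ι → ι → ℝ)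
    (hH : ∀ i j, H i j = H j i) (hH0 : ∀ i, H i i = 0) :
    ∑ k ∈ A, ∑ i ∈ A.erase k, ∑ j ∈ A.erase k, H i j =
      (A.card - 2) * ∑ i ∈ A, ∑ j ∈ A, H i j := by
  have h : ∀ k ∈ A, ∑ i ∈ A.erase k, ∑ j ∈ A.erase k, H i j =
      ∑ i ∈ A, ∑ j ∈ A, H i j - 2 * ∑ j ∈ A, H k j := by
    intro k hk
    simp only [Finset.sum_erase_eq_sub hk, Finset.sum_sub_distrib, hH0, hH _ k]
    ring
  rw [Finset.sum_congr rfl h, Finset.sum_sub_distrib, ← Finset.mul_sum, Finset.sum_const,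
    nsmul_eq_mul]
  ring

lemma sum_sum_eq_two_mul_sum_lt [Fintype ι] [LinearOrder ι] (H : ι → ι → ℝ)
    (hH : ∀ i j, H i j = H j i) (hH0 : ∀ i, H i i = 0) :
    ∑ i, ∑ j, H i j = 2 * ∑ p ∈ univ.filter (fun p : ι × ι => p.1 < p.2), H p.1 p.2 := by
  have split : ∀ i j, H i j = (if i < j then H i j else 0) + if j < i then H j i else 0 := by
    intro i j
    rcases lt_trichotomy i j with h | rfl | h
    · simp [h, h.not_gt]
    · simp [hH0]
    · simp [h, h.not_gt, hH i j]
  simp only [Finset.sum_filter, Fintype.sum_prod_type]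
  rw [Finset.sum_congr rfl fun i _ => Finset.sum_congr rfl fun j _ => split i j]
  simp only [Finset.sum_add_distrib]
  rw [Finset.sum_comm (f := fun i j => if j < i then H j i else 0)]
  ring

/-- Averaging the one-coordinate bounds over the free coordinates `k`. -/
lemma sum_erase_div_add_div_le [DecidableEq ι] (A : Finset ι) (H : ι → ι → ℝ)
    (hH : ∀ i j, H i j = H j i) (hH0 : ∀ i, H i i = 0) (hHnn : ∀ i j, 0 ≤ H i j) :
    ∑ k ∈ A, ((∑ i ∈ A.erase k, ∑ j ∈ A.erase k, H i j) / (2 * (A.erase k).card) +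
      (∑ j ∈ A, H k j) / (2 * A.card)) ≤
      A.card * ((∑ i ∈ A, ∑ j ∈ A, H i j) / (2 * A.card)) := by
  rcases A.eq_empty_or_nonempty with rfl | hA
  · simp
  have hS : 0 ≤ ∑ i ∈ A, ∑ j ∈ A, H i j :=
    Finset.sum_nonneg fun i _ => Finset.sum_nonneg fun j _ => hHnn i j
  have hm : (1 : ℝ) ≤ A.card := Nat.one_le_cast.2 hA.card_pos
  have hcard : ∀ k ∈ A, ((A.erase k).card : ℝ) = A.card - 1 := fun k hk => by
    rw [Finset.card_erase_of_mem hk, Nat.cast_pred hA.card_pos]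
  rw [Finset.sum_congr rfl fun k hk => by rw [hcard k hk], Finset.sum_add_distrib,
    ← Finset.sum_div, ← Finset.sum_div, sum_sum_erase_sum_erase A H hH hH0]
  rcases hm.eq_or_lt with h1 | h1
  · simp [← h1]
  · rw [div_add_div _ _ (by linarith) (by linarith), div_le_iff₀ (by nlinarith)]
    field_simp
    nlinarith

end Averaging

section Induction

open Real

variable {L n : ℕ} {κ : Fin L → ℕ} {A : Finset (Fin n)} {τ : Fin n → Fin L}
  {k : Fin n} {f : (Fin n → Fin L) → ℝ}

lemma entropy_condExpect_le (hf : ∀ ω, 0 < f ω) (hk : k ∈ A) :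
    entropy (condSlice L n κ A τ) (condExpect (condSlice L n κ A τ) (fun ω => ω k) f) ≤
      expect (condSlice L n κ A τ) fun ω =>
        (∑ j ∈ A, entropyProduction f k j ω) / (2 * A.card) := by
  set Ω := condSlice L n κ A τ
  set g := condExpect Ω (fun ω => ω k) f
  rcases Ω.eq_empty_or_nonempty with hΩ | hΩ
  · simp [hΩ, entropy, expect]
  have hg : ∀ ω ∈ Ω, 0 < g ω := fun ω hω =>
    expect_pos (Ω := Ω.filter fun ω' => ω' k = ω k) ⟨ω, mem_filter.2 ⟨hω, rfl⟩⟩ fun _ _ => hf _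
  have hpairs := card_mul_sum_sum_condExpect_le (κ := κ) (τ := τ) hf hk
  have hm : (0 : ℝ) < A.card := Nat.cast_pos.2 (Finset.card_pos.2 ⟨k, hk⟩)
  calc entropy Ω g
      ≤ (∑ ω ∈ Ω, ∑ ω' ∈ Ω, (g ω - g ω') * (log (g ω) - log (g ω'))) / (2 * Ω.card ^ 2) :=
        entropy_le_sum_sum hg
    _ ≤ (Ω.card * (∑ ω ∈ Ω, ∑ j ∈ A, entropyProduction f k j ω) / A.card) /
          (2 * Ω.card ^ 2) := by
        gcongr
        rw [le_div_iff₀ hm]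
        linarith
    _ = _ := by
        rw [expect_div_const, expect]
        field_simp

lemma entropy_condSlice_le_of_erase (hf : ∀ ω, 0 < f ω) (hk : k ∈ A)
    {Y : (Fin n → Fin L) → ℝ} (ih : ∀ ℓ : Fin L,
      entropy (condSlice L n κ (A.erase k) (Function.update τ k ℓ)) f ≤
        expect (condSlice L n κ (A.erase k) (Function.update τ k ℓ)) Y) :
    entropy (condSlice L n κ A τ) f ≤ expect (condSlice L n κ A τ) fun ω =>
      Y ω + (∑ j ∈ A, entropyProduction f k j ω) / (2 * A.card) := by
  rw [entropy_eq_expect_entropy_add _ (fun ω => ω k), expect_add]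
  gcongr ?_ + ?_
  · calc _ ≤ expect (condSlice L n κ A τ) (condExpect (condSlice L n κ A τ) (fun ω => ω k) Y) :=
          expect_mono fun ω _ => by
            rw [condExpect, filter_condSlice_eq hk]
            exact ih _
      _ = _ := expect_condExpect _ _ _
  · exact entropy_condExpect_le hf hk

theorem entropy_condSlice_le (hf : ∀ ω, 0 < f ω) (A : Finset (Fin n)) (τ : Fin n → Fin L) :
    entropy (condSlice L n κ A τ) f ≤ expect (condSlice L n κ A τ) fun ω =>
      (∑ i ∈ A, ∑ j ∈ A, entropyProduction f i j ω) / (2 * A.card) := by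
  induction A using Finset.strongInduction generalizing τ with
  | H A ih =>
  rcases A.eq_empty_or_nonempty with rfl | hA
  · simp [entropy_eq_zero_of_card_le_one f card_condSlice_empty_le_one, expect]
  have hm : (0 : ℝ) < A.card := Nat.cast_pos.2 hA.card_pos
  refine le_of_mul_le_mul_left ?_ hm
  calc A.card * entropy (condSlice L n κ A τ) f
      = ∑ k ∈ A, entropy (condSlice L n κ A τ) f := by rw [Finset.sum_const, nsmul_eq_mul]
    _ ≤ ∑ k ∈ A, expect (condSlice L n κ A τ) fun ω =>
          (∑ i ∈ A.erase k, ∑ j ∈ A.erase k, entropyProduction f i j ω) /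
            (2 * (A.erase k).card) + (∑ j ∈ A, entropyProduction f k j ω) / (2 * A.card) :=
        Finset.sum_le_sum fun k hk => entropy_condSlice_le_of_erase hf hk fun _ =>
          ih _ (Finset.erase_ssubset hk) _
    _ = expect (condSlice L n κ A τ) fun ω => ∑ k ∈ A,
          ((∑ i ∈ A.erase k, ∑ j ∈ A.erase k, entropyProduction f i j ω) /
            (2 * (A.erase k).card) + (∑ j ∈ A, entropyProduction f k j ω) / (2 * A.card)) :=
        (expect_sum _ _ _).symm
    _ ≤ expect (condSlice L n κ A τ) fun ω => A.card *
          ((∑ i ∈ A, ∑ j ∈ A, entropyProduction f i j ω) / (2 * A.card)) :=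
        expect_mono fun ω _ => sum_erase_div_add_div_le A (fun i j => entropyProduction f i j ω)
          (fun i j => congrFun (entropyProduction_comm f i j) ω)
          (fun i => congrFun (entropyProduction_self f i) ω)
          fun i j => entropyProduction_nonneg hf i j ω
    _ = _ := expect_const_mul _ _ _

end Induction

theorem multislice_mlsi_upper_general
    (L : ℕ) (κ : Fin L → ℕ)
    (n : ℕ)
    (f : (Fin n → Fin L) → ℝ) (hf : ∀ ω, 0 < f ω) :
    entropy (slice L n κ) f ≤
      2 * dirichlet (slice L n κ) f (fun ω => Real.log (f ω)) := by
  rcases (slice L n κ).eq_empty_or_nonempty with hΩ | ⟨τ, -⟩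
  · simp [hΩ, entropy, dirichlet, expect]
  have h := entropy_condSlice_le (κ := κ) hf univ τ
  rw [condSlice_univ, expect_div_const] at h
  simp only [expect_sum] at h
  rw [sum_sum_eq_two_mul_sum_lt _ (fun i j => by rw [entropyProduction_comm])
    (fun i => by simp [entropyProduction_self, expect]), card_univ, Fintype.card_fin] at h
  rw [dirichlet_log_eq]
  convert h using 1
  ring

/-- the modified log-Sobolev inequality holds on the multislice with
constant 2. -/
theorem multislice_mlsi_upper
    (L : ℕ) (hL : 2 ≤ L) (κ : Fin L → ℕ) (hκ : ∀ ℓ, 0 < κ ℓ)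
    (n : ℕ) (hn : n = ∑ ℓ, κ ℓ)
    (f : (Fin n → Fin L) → ℝ) (hf : ∀ ω, 0 < f ω) :
    entropy (slice L n κ) f ≤
      2 * dirichlet (slice L n κ) f (fun ω => Real.log (f ω)) :=
  multislice_mlsi_upper_general L κ n f hf

end Multislice
end
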